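/- arXiv:1412.5079 — 2 statements merged into one kernel-verified Lean document; each statement's English description precedes it below -/
import Mathlib

section
/- Odd-even transposition invariant: Let m : ℕ → ℤ be an injective labeling of stack positions 1, 2, 3, … satisfying m(2n) < m(2n+k) for all n ≥ 1, k ≥ 1. Perform one round of swaps: for every n ≥ 0, swap positions 2n+1 and 2n+2 if m(2n+1) > m(2n+2). Then the resulting labeling m′ satisfies m′(2n+1) < m′(2n+1+k) for all n ≥ 0, k ≥ 1. -/
/-- Odd-even transposition invariant, first half. Positions are `1, 2, 3, …`
with distinct integer labels `m`, satisfying `m(2n) < m(2n+k)` for `n, k ≥ 1`.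
After one parallel round of conditional swaps at pairs `(2n+1, 2n+2)` (swap when
the left label exceeds the right one, so the new labels are the min resp. max),
the new labeling `m'` satisfies `m'(2n+1) < m'(2n+1+k)` for all `n ≥ 0, k ≥ 1`. -/
theorem stmt_10 (m m' : ℕ → ℤ)
    (hinj : ∀ i j, 1 ≤ i → 1 ≤ j → m i = m j → i = j)
    (h : ∀ n k, 1 ≤ n → 1 ≤ k → m (2 * n) < m (2 * n + k))
    (hodd : ∀ n, m' (2 * n + 1) = min (m (2 * n + 1)) (m (2 * n + 2)))
    (heven : ∀ n, m' (2 * n + 2) = max (m (2 * n + 1)) (m (2 * n + 2))) :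
    ∀ n k, 1 ≤ k → m' (2 * n + 1) < m' (2 * n + 1 + k) := by
  intro n k hk
  have hmin : m' (2 * n + 1) ≤ m (2 * n + 2) := by
    rw [hodd]; exact min_le_right _ _
  rcases Nat.even_or_odd k with ⟨t, ht⟩ | ⟨t, ht⟩
  · -- k = 2t, t ≥ 1, target odd position 2(n+t)+1
    have ht1 : 1 ≤ t := by omega
    have harr : 2 * n + 1 + k = 2 * (n + t) + 1 := by omega
    rw [harr, hodd n, hodd (n + t)]
    have h1 : m (2 * n + 2) < m (2 * (n + t) + 1) := by
      have e1 : 2 * (n + 1) + (2 * t - 1) = 2 * (n + t) + 1 := by omega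
      have e2 : 2 * (n + 1) = 2 * n + 2 := by omega
      have := h (n + 1) (2 * t - 1) (by omega) (by omega)
      rwa [e1, e2] at this
    have h2 : m (2 * n + 2) < m (2 * (n + t) + 2) := by
      have e1 : 2 * (n + 1) + 2 * t = 2 * (n + t) + 2 := by omega
      have e2 : 2 * (n + 1) = 2 * n + 2 := by omega
      have := h (n + 1) (2 * t) (by omega) (by omega)
      rwa [e1, e2] at this
    exact lt_of_le_of_lt (min_le_right _ _) (lt_min h1 h2)
  · -- k = 2t + 1, target even position 2(n+t)+2
    have harr : 2 * n + 1 + k = 2 * (n + t) + 2 := by omega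
    rw [harr, heven]
    rcases Nat.eq_zero_or_pos t with rfl | ht1
    · simp only [Nat.add_zero]
      rw [hodd]
      have hne : m (2 * n + 1) ≠ m (2 * n + 2) := by
        intro he
        have := hinj _ _ (by omega) (by omega) he
        omega
      rcases lt_or_gt_of_ne hne with hlt | hgt
      · calc min (m (2*n+1)) (m (2*n+2)) ≤ m (2*n+1) := min_le_left _ _
          _ < m (2*n+2) := hlt
          _ ≤ max (m (2*n+1)) (m (2*n+2)) := le_max_right _ _
      · calc min (m (2*n+1)) (m (2*n+2)) ≤ m (2*n+2) := min_le_right _ _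
          _ < m (2*n+1) := hgt
          _ ≤ max (m (2*n+1)) (m (2*n+2)) := le_max_left _ _
    · have h2 : m (2 * n + 2) < m (2 * (n + t) + 2) := by
        have e1 : 2 * (n + 1) + 2 * t = 2 * (n + t) + 2 := by omega
        have e2 : 2 * (n + 1) = 2 * n + 2 := by omega
        have := h (n + 1) (2 * t) (by omega) (by omega)
        rwa [e1, e2] at this
      exact lt_of_le_of_lt hmin (lt_of_lt_of_le h2 (le_max_right _ _))
end

section
/- Odd-even transposition invariant, second half: Let m : ℕ → ℤ be injective with m(2n+1) < m(2n+1+k) for all n ≥ 0, k ≥ 1. Perform one round of swaps at positions (2n, 2n+1) for n ≥ 1 (swapping when m(2n) > m(2n+1)). Then the resulting labeling m′ satisfies both m′(1) ≤ m′(i) for all i ≥ 1 and m′(2n) < m′(2n+k) for all n, k ≥ 1. -/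
/-- Odd-even transposition invariant, second half. Positions are `1, 2, 3, …`
with distinct integer labels `m`, satisfying `m(2n+1) < m(2n+1+k)` for
`n ≥ 0, k ≥ 1`. After one parallel round of conditional swaps at pairs
`(2n, 2n+1)` for `n ≥ 1` (swap when the left label exceeds the right one),
the new labeling `m'` satisfies `m'(1) ≤ m'(i)` for all `i ≥ 1` and
`m'(2n) < m'(2n+k)` for all `n, k ≥ 1`. -/
theorem stmt_11 (m m' : ℕ → ℤ)
    (hinj : ∀ i j, 1 ≤ i → 1 ≤ j → m i = m j → i = j)
    (h : ∀ n k, 1 ≤ k → m (2 * n + 1) < m (2 * n + 1 + k))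
    (h1 : m' 1 = m 1)
    (heven : ∀ n, 1 ≤ n → m' (2 * n) = min (m (2 * n)) (m (2 * n + 1)))
    (hodd : ∀ n, 1 ≤ n → m' (2 * n + 1) = max (m (2 * n)) (m (2 * n + 1))) :
    (∀ i, 1 ≤ i → m' 1 ≤ m' i) ∧
      ∀ n k, 1 ≤ n → 1 ≤ k → m' (2 * n) < m' (2 * n + k) := by
  have hm1 : ∀ j, 2 ≤ j → m 1 < m j := by
    intro j hj
    have h0 := h 0 (j - 1) (by omega)
    rw [show 2 * 0 + 1 + (j - 1) = j by omega] at h0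
    simpa using h0
  constructor
  · intro i hi
    rw [h1]
    rcases Nat.lt_or_ge i 2 with hi2 | hi2
    · rw [show i = 1 by omega, h1]
    rcases Nat.even_or_odd i with ⟨t, ht⟩ | ⟨t, ht⟩
    · have ht1 : 1 ≤ t := by omega
      rw [show i = 2 * t by omega, heven t ht1]
      exact le_min (le_of_lt (hm1 (2 * t) (by omega)))
        (le_of_lt (hm1 (2 * t + 1) (by omega)))
    · have ht1 : 1 ≤ t := by omega
      rw [show i = 2 * t + 1 by omega, hodd t ht1]
      exact le_trans (le_of_lt (hm1 (2 * t) (by omega))) (le_max_left _ _)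
  · intro n k hn hk
    rw [heven n hn]
    rcases Nat.even_or_odd k with ⟨t, ht⟩ | ⟨t, ht⟩
    · have ht1 : 1 ≤ t := by omega
      rw [show 2 * n + k = 2 * (n + t) by omega, heven (n + t) (by omega)]
      have ha : m (2 * n + 1) < m (2 * (n + t)) := by
        have := h n (2 * t - 1) (by omega)
        rwa [show 2 * n + 1 + (2 * t - 1) = 2 * (n + t) by omega] at this
      have hb : m (2 * n + 1) < m (2 * (n + t) + 1) := by
        have := h n (2 * t) (by omega)
        rwa [show 2 * n + 1 + 2 * t = 2 * (n + t) + 1 by omega] at this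
      exact lt_min (lt_of_le_of_lt (min_le_right _ _) ha)
        (lt_of_le_of_lt (min_le_right _ _) hb)
    · rw [show 2 * n + k = 2 * (n + t) + 1 by omega, hodd (n + t) (by omega)]
      rcases Nat.eq_zero_or_pos t with rfl | ht1
      · have hne : m (2 * n) ≠ m (2 * n + 1) := fun he => by
          have := hinj (2 * n) (2 * n + 1) (by omega) (by omega) he
          omega
        simpa using min_lt_max.mpr hne
      · have hc : m (2 * n + 1) < m (2 * (n + t) + 1) := by
          have := h n (2 * t) (by omega)
          rwa [show 2 * n + 1 + 2 * t = 2 * (n + t) + 1 by omega] at this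
        exact lt_of_le_of_lt (min_le_right _ _)
          (lt_of_lt_of_le hc (le_max_right _ _))
end
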